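/- arXiv:2002.03374 — 3 statements merged into one kernel-verified Lean document; each statement's English description precedes it below -/
import Mathlib

section
/- Let S and X_1, …, X_N be random variables on a common probability space taking values in finite sets, and let B and Z be disjoint subsets of {1, …, N}. If H(S | X_{B∪Z}) = 0 (the variables indexed by B∪Z determine S) and H(S | X_Z) = H(S) (the variables indexed by Z are independent of S in the entropy sense), then H(S) ≤ H(X_B | X_Z), and consequently H(S) ≤ H(X_B). -/
/-! Since `X_Z` carries no information about `S`,
`H(S) = H(S, X_Z) - H(X_Z) ≤ H(S, X_{B ∪ Z}) - H(X_Z)`, and since `X_{B ∪ Z}` determines `S`,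
`H(S, X_{B ∪ Z}) = H(X_{B ∪ Z}) = H(X_B, X_Z)`; hence `H(S) ≤ H(X_B | X_Z)`.
Conditioning does not increase entropy, by subadditivity of entropy (Gibbs' inequality),
so `H(X_B | X_Z) ≤ H(X_B)`. -/

open Finset

/-- The probability that the random variable `X` takes the value `a`, under the
probability mass function `p` on the finite sample space `Ω`. -/
noncomputable def probOf {Ω : Type*} [Fintype Ω] (p : Ω → ℝ) {A : Type*} [DecidableEq A]
    (X : Ω → A) (a : A) : ℝ :=
  ∑ ω ∈ Finset.univ.filter fun ω => X ω = a, p ω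

/-- Shannon entropy of the random variable `X` with logarithm base `b`. -/
noncomputable def entropy {Ω : Type*} [Fintype Ω] (b : ℝ) (p : Ω → ℝ) {A : Type*}
    [Fintype A] [DecidableEq A] (X : Ω → A) : ℝ :=
  -∑ a : A, probOf p X a * Real.logb b (probOf p X a)

/-- Conditional Shannon entropy `H(X | Y)` with logarithm base `b`,
defined by the chain rule `H(X | Y) = H(X, Y) - H(Y)`. -/
noncomputable def condEntropy {Ω : Type*} [Fintype Ω] (b : ℝ) (p : Ω → ℝ) {A B : Type*}
    [Fintype A] [DecidableEq A] [Fintype B] [DecidableEq B] (X : Ω → A) (Y : Ω → B) : ℝ :=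
  entropy b p (fun ω => (X ω, Y ω)) - entropy b p Y

/-- The tuple `X_A = (X_i)_{i ∈ A}` of a family of random variables. -/
def tupleOn {Ω : Type*} {N : ℕ} {V : Fin N → Type*} (X : ∀ i, Ω → V i) (A : Finset (Fin N)) :
    Ω → ∀ i : A, V i :=
  fun ω i => X i ω

open Function

section probOf

variable {Ω : Type*} [Fintype Ω] {p : Ω → ℝ} {A A' : Type*}

lemma probOf_nonneg (hp : ∀ ω, 0 ≤ p ω) [DecidableEq A] (X : Ω → A) (a : A) :
    0 ≤ probOf p X a :=
  sum_nonneg fun ω _ => hp ω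

lemma sum_probOf [Fintype A] [DecidableEq A] (X : Ω → A) : ∑ a, probOf p X a = ∑ ω, p ω :=
  sum_fiberwise _ _ _

lemma probOf_comp [Fintype A] [DecidableEq A] [DecidableEq A'] (f : A → A') (X : Ω → A)
    (c : A') : probOf p (fun ω => f (X ω)) c = ∑ a with f a = c, probOf p X a := by
  unfold probOf
  rw [sum_fiberwise_eq_sum_filter]
  simp only [mem_filter, mem_univ, true_and]

lemma le_probOf_comp (hp : ∀ ω, 0 ≤ p ω) [Fintype A] [DecidableEq A] [DecidableEq A']
    (f : A → A') (X : Ω → A) (a : A) :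
    probOf p X a ≤ probOf p (fun ω => f (X ω)) (f a) := by
  rw [probOf_comp f X]
  exact single_le_sum (fun a' _ => probOf_nonneg hp X a') (by simp)

lemma probOf_comp_of_injective [DecidableEq A] [DecidableEq A'] {f : A → A'} (hf : Injective f)
    (X : Ω → A) (a : A) : probOf p (fun ω => f (X ω)) (f a) = probOf p X a := by
  simp only [probOf, hf.eq_iff]

lemma sum_probOf_comp_mul [Fintype A] [DecidableEq A] [Fintype A'] [DecidableEq A']
    (f : A → A') (X : Ω → A) (g : A' → ℝ) :
    ∑ c, probOf p (fun ω => f (X ω)) c * g c = ∑ a, probOf p X a * g (f a) := by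
  simp_rw [probOf_comp f X, sum_mul]
  rw [← sum_fiberwise univ f fun a => probOf p X a * g (f a)]
  refine sum_congr rfl fun c _ => sum_congr rfl fun a ha => ?_
  rw [(mem_filter.1 ha).2]

end probOf

/-- `log t ≤ t - 1` at `t = u v / x`; summed against a joint law this is Gibbs' inequality. -/
lemma mul_log_add_log_sub_log_le {x u v : ℝ} (hx : 0 ≤ x) (hxu : x ≤ u) (hxv : x ≤ v) :
    x * (Real.log u + Real.log v - Real.log x) ≤ u * v - x := by
  rcases hx.eq_or_lt with rfl | hx
  · simpa using mul_nonneg hxu hxv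
  have hu : 0 < u := hx.trans_le hxu
  have hv : 0 < v := hx.trans_le hxv
  have hlog : Real.log (u * v / x) = Real.log u + Real.log v - Real.log x := by
    rw [Real.log_div (by positivity) hx.ne', Real.log_mul hu.ne' hv.ne']
  calc x * (Real.log u + Real.log v - Real.log x) ≤ x * (u * v / x - 1) := by
        rw [← hlog]
        exact mul_le_mul_of_nonneg_left (Real.log_le_sub_one_of_pos (by positivity)) hx.le
    _ = u * v - x := by field_simp

section entropy

variable {Ω : Type*} [Fintype Ω] {b : ℝ} {p : Ω → ℝ}
  {A A' C : Type*} [Fintype A] [DecidableEq A] [Fintype A'] [DecidableEq A']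
  [Fintype C] [DecidableEq C]

lemma entropy_comp_le (hb : 1 < b) (hp : ∀ ω, 0 ≤ p ω) (f : A → A') (X : Ω → A) :
    entropy b p (fun ω => f (X ω)) ≤ entropy b p X := by
  unfold entropy
  rw [sum_probOf_comp_mul f X, neg_le_neg_iff]
  refine sum_le_sum fun a _ => ?_
  rcases (probOf_nonneg hp X a).eq_or_lt with h | h
  · simp [← h]
  · exact mul_le_mul_of_nonneg_left
      (Real.logb_le_logb_of_le hb h (le_probOf_comp hp f X a)) h.le

lemma entropy_comp_of_injective {f : A → A'} (hf : Injective f) (X : Ω → A) :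
    entropy b p (fun ω => f (X ω)) = entropy b p X := by
  unfold entropy
  rw [sum_probOf_comp_mul f X]
  simp only [probOf_comp_of_injective hf]

lemma entropy_pair_le (hb : 1 < b) (hp : ∀ ω, 0 ≤ p ω) (hp1 : ∑ ω, p ω = 1)
    (X : Ω → A) (Y : Ω → C) :
    entropy b p (fun ω => (X ω, Y ω)) ≤ entropy b p X + entropy b p Y := by
  set s := probOf p (fun ω => (X ω, Y ω))
  set q := probOf p X
  set r := probOf p Y
  have hX : entropy b p X = -∑ xy, s xy * Real.logb b (q xy.1) :=
    congrArg Neg.neg <|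
      sum_probOf_comp_mul Prod.fst (fun ω => (X ω, Y ω)) (fun x => Real.logb b (q x))
  have hY : entropy b p Y = -∑ xy, s xy * Real.logb b (r xy.2) :=
    congrArg Neg.neg <|
      sum_probOf_comp_mul Prod.snd (fun ω => (X ω, Y ω)) (fun y => Real.logb b (r y))
  have gibbs : ∑ xy, s xy * (Real.log (q xy.1) + Real.log (r xy.2) - Real.log (s xy)) ≤ 0 :=
    calc _ ≤ ∑ xy, (q xy.1 * r xy.2 - s xy) := sum_le_sum fun xy _ =>
          mul_log_add_log_sub_log_le (probOf_nonneg hp _ xy)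
            (le_probOf_comp hp Prod.fst _ xy) (le_probOf_comp hp Prod.snd _ xy)
      _ = 0 := by
          rw [sum_sub_distrib, Fintype.sum_prod_type]
          simp only [← mul_sum, ← sum_mul, q, r, s, sum_probOf, hp1]
          norm_num
  have hdiff : entropy b p X + entropy b p Y - entropy b p (fun ω => (X ω, Y ω)) =
      -(∑ xy, s xy * (Real.log (q xy.1) + Real.log (r xy.2) - Real.log (s xy))) / Real.log b := by
    have hXY : entropy b p (fun ω => (X ω, Y ω)) = -∑ xy, s xy * Real.logb b (s xy) := rfl
    rw [hX, hY, hXY]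
    simp only [Real.logb, ← sum_neg_distrib, ← sum_add_distrib, ← sum_sub_distrib, sum_div]
    exact sum_congr rfl fun _ _ => by ring
  linarith [div_nonneg (neg_nonneg.2 gibbs) (Real.log_pos hb).le]

lemma condEntropy_le_entropy (hb : 1 < b) (hp : ∀ ω, 0 ≤ p ω) (hp1 : ∑ ω, p ω = 1)
    (X : Ω → A) (Y : Ω → C) : condEntropy b p X Y ≤ entropy b p X := by
  unfold condEntropy
  linarith [entropy_pair_le hb hp hp1 X Y]

end entropy

lemma Finset.injective_restrict₂_union {ι : Type*} [DecidableEq ι] {π : ι → Type*}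
    (s t : Finset ι) :
    Injective fun f : ∀ i : (s ∪ t : Finset ι), π i =>
      (restrict₂ subset_union_left f, restrict₂ subset_union_right f) := by
  intro f g h
  funext i
  rcases mem_union.1 i.2 with hs | ht
  · exact congrFun (congrArg Prod.fst h) ⟨i.1, hs⟩
  · exact congrFun (congrArg Prod.snd h) ⟨i.1, ht⟩

theorem secret_entropy_le_condEntropy_of_decoding_of_privacy_general
    {Ω : Type*} [Fintype Ω] {N : ℕ} (b : ℝ) (hb : 1 < b)
    (p : Ω → ℝ) (hp : ∀ ω, 0 ≤ p ω) (hp1 : ∑ ω, p ω = 1)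
    {σ : Type*} [Fintype σ] [DecidableEq σ] (S : Ω → σ)
    {V : Fin N → Type*} [∀ i, Fintype (V i)] [∀ i, DecidableEq (V i)]
    (X : ∀ i, Ω → V i)
    (B Z : Finset (Fin N))
    (hdec : condEntropy b p S (tupleOn X (B ∪ Z)) = 0)
    (hpriv : condEntropy b p S (tupleOn X Z) = entropy b p S) :
    entropy b p S ≤ condEntropy b p (tupleOn X B) (tupleOn X Z) ∧
      entropy b p S ≤ entropy b p (tupleOn X B) := by
  have hjoint : entropy b p (fun ω => (tupleOn X B ω, tupleOn X Z ω)) =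
      entropy b p (tupleOn X (B ∪ Z)) :=
    entropy_comp_of_injective (injective_restrict₂_union (π := V) B Z) (tupleOn X (B ∪ Z))
  have hjointS : entropy b p (fun ω => (S ω, (tupleOn X B ω, tupleOn X Z ω))) =
      entropy b p (fun ω => (S ω, tupleOn X (B ∪ Z) ω)) :=
    entropy_comp_of_injective
      (injective_id.prodMap (injective_restrict₂_union (π := V) B Z))
      (fun ω => (S ω, tupleOn X (B ∪ Z) ω))
  have hforget : entropy b p (fun ω => (S ω, tupleOn X Z ω)) ≤
      entropy b p (fun ω => (S ω, (tupleOn X B ω, tupleOn X Z ω))) :=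
    entropy_comp_le (p := p) hb hp (Prod.map id Prod.snd)
      (fun ω => (S ω, (tupleOn X B ω, tupleOn X Z ω)))
  have hcond : entropy b p S ≤ condEntropy b p (tupleOn X B) (tupleOn X Z) := by
    unfold condEntropy at *
    linarith
  exact ⟨hcond, hcond.trans (condEntropy_le_entropy hb hp hp1 _ _)⟩

/-- If `X_{B ∪ Z}` determines `S` and `X_Z` is independent of `S` (in the entropy
sense), then `H(S) ≤ H(X_B | X_Z)` and consequently `H(S) ≤ H(X_B)`. -/
theorem secret_entropy_le_condEntropy_of_decoding_of_privacy
    {Ω : Type*} [Fintype Ω] {N : ℕ} (b : ℝ) (hb : 1 < b)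
    (p : Ω → ℝ) (hp : ∀ ω, 0 ≤ p ω) (hp1 : ∑ ω, p ω = 1)
    {σ : Type*} [Fintype σ] [DecidableEq σ] (S : Ω → σ)
    {V : Fin N → Type*} [∀ i, Fintype (V i)] [∀ i, DecidableEq (V i)]
    (X : ∀ i, Ω → V i)
    (B Z : Finset (Fin N)) (hBZ : Disjoint B Z)
    (hdec : condEntropy b p S (tupleOn X (B ∪ Z)) = 0)
    (hpriv : condEntropy b p S (tupleOn X Z) = entropy b p S) :
    entropy b p S ≤ condEntropy b p (tupleOn X B) (tupleOn X Z) ∧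
      entropy b p S ≤ entropy b p (tupleOn X B) :=
  secret_entropy_le_condEntropy_of_decoding_of_privacy_general b hb p hp hp1 S X B Z hdec hpriv
end

section
/- Ramp secret-sharing entropy bound: let S and X_1, …, X_N be random variables on a common probability space taking values in finite sets, let 0 ≤ ζ ≤ κ ≤ N be integers and α ≥ 0 a real number. Suppose (resiliency) H(S | X_A) = 0 for every A ⊆ {1,…,N} with |A| = κ, (privacy) H(S | X_Z) = H(S) for every Z ⊆ {1,…,N} with |Z| = ζ, and H(X_i) ≤ α for every i. Then H(S) ≤ (κ − ζ)·α. -/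
open Finset

section aux
variable {Ω : Type*} [Fintype Ω] {b : ℝ} {p : Ω → ℝ}

lemma rssb_probOf_nonneg (hp : ∀ ω, 0 ≤ p ω) {A : Type*} [DecidableEq A] (X : Ω → A) (a : A) :
    0 ≤ probOf p X a :=
  Finset.sum_nonneg fun ω _ => hp ω

lemma rssb_sum_probOf (hp1 : ∑ ω, p ω = 1) {A : Type*} [Fintype A] [DecidableEq A] (X : Ω → A) :
    ∑ a, probOf p X a = 1 := by
  rw [← hp1]
  exact Finset.sum_fiberwise_of_maps_to (fun ω _ => Finset.mem_univ _) p

lemma rssb_probOf_comp {A B : Type*} [Fintype A] [DecidableEq A] [DecidableEq B]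
    (X : Ω → A) (g : A → B) (c : B) :
    probOf p (fun ω => g (X ω)) c = ∑ a ∈ Finset.univ.filter fun a => g a = c, probOf p X a := by
  unfold probOf
  rw [← Finset.sum_fiberwise_of_maps_to (g := X) (t := Finset.univ.filter fun a => g a = c)
    (s := Finset.univ.filter fun ω => g (X ω) = c)]
  · apply Finset.sum_congr rfl
    intro a ha
    simp only [Finset.mem_filter, Finset.mem_univ, true_and] at ha
    congr 1
    ext ω
    simp only [Finset.mem_filter, Finset.mem_univ, true_and]
    constructor
    · rintro ⟨-, h⟩; exact h
    · intro h; exact ⟨by rw [h, ha], h⟩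
  · intro ω hω
    simp only [Finset.mem_filter, Finset.mem_univ, true_and] at hω ⊢
    exact hω

lemma rssb_entropy_comp_le (hb : 1 < b) (hp : ∀ ω, 0 ≤ p ω) {A B : Type*} [Fintype A] [DecidableEq A] [Fintype B] [DecidableEq B]
    (X : Ω → A) (g : A → B) :
    entropy b p (fun ω => g (X ω)) ≤ entropy b p X := by
  unfold entropy
  rw [neg_le_neg_iff]
  rw [← Finset.sum_fiberwise_of_maps_to (g := g) (t := Finset.univ)
      (fun a _ => Finset.mem_univ _)
      (fun a => probOf p X a * Real.logb b (probOf p X a))]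
  apply Finset.sum_le_sum
  intro c _
  rw [rssb_probOf_comp X g c]
  rw [Finset.sum_mul]
  apply Finset.sum_le_sum
  intro a ha
  rcases eq_or_lt_of_le (rssb_probOf_nonneg hp X a) with h0 | h0
  · rw [← h0]; simp
  · apply mul_le_mul_of_nonneg_left _ (le_of_lt h0)
    have hQ : probOf p X a ≤ ∑ a' ∈ Finset.univ.filter fun a' => g a' = c, probOf p X a' :=
      Finset.single_le_sum (fun a _ => rssb_probOf_nonneg hp X a) ha
    exact (Real.logb_le_logb hb h0 (lt_of_lt_of_le h0 hQ)).mpr hQ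

lemma rssb_entropy_congr (hb : 1 < b) (hp : ∀ ω, 0 ≤ p ω) {A B : Type*} [Fintype A] [DecidableEq A] [Fintype B] [DecidableEq B]
    (X : Ω → A) (Y : Ω → B) (g : A → B) (h : B → A)
    (hg : ∀ ω, g (X ω) = Y ω) (hh : ∀ ω, h (Y ω) = X ω) :
    entropy b p X = entropy b p Y := by
  have h1 : entropy b p Y = entropy b p (fun ω => g (X ω)) := by
    congr 1; funext ω; rw [hg]
  have h2 : entropy b p X = entropy b p (fun ω => h (Y ω)) := by
    congr 1; funext ω; rw [hh]
  apply le_antisymm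
  · rw [h2]; exact rssb_entropy_comp_le hb hp Y h
  · rw [h1]; exact rssb_entropy_comp_le hb hp X g

lemma rssb_marginal_fst {A B : Type*} [Fintype A] [DecidableEq A] [Fintype B] [DecidableEq B]
    (X : Ω → A) (Y : Ω → B) (x : A) :
    probOf p X x = ∑ y, probOf p (fun ω => (X ω, Y ω)) (x, y) := by
  unfold probOf
  rw [← Finset.sum_fiberwise_of_maps_to (g := Y) (t := Finset.univ)
      (s := Finset.univ.filter fun ω => X ω = x) (fun ω _ => Finset.mem_univ _) p]
  apply Finset.sum_congr rfl
  intro y _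
  congr 1
  ext ω
  simp only [Finset.mem_filter, Finset.mem_univ, true_and, Prod.mk.injEq]

lemma rssb_marginal_snd {A B : Type*} [Fintype A] [DecidableEq A] [Fintype B] [DecidableEq B]
    (X : Ω → A) (Y : Ω → B) (y : B) :
    probOf p Y y = ∑ x, probOf p (fun ω => (X ω, Y ω)) (x, y) := by
  unfold probOf
  rw [← Finset.sum_fiberwise_of_maps_to (g := X) (t := Finset.univ)
      (s := Finset.univ.filter fun ω => Y ω = y) (fun ω _ => Finset.mem_univ _) p]
  apply Finset.sum_congr rfl
  intro x _
  congr 1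
  ext ω
  simp only [Finset.mem_filter, Finset.mem_univ, true_and, Prod.mk.injEq]
  tauto

lemma rssb_subadd (hb : 1 < b) (hp : ∀ ω, 0 ≤ p ω) (hp1 : ∑ ω, p ω = 1)
    {A B : Type*} [Fintype A] [DecidableEq A] [Fintype B] [DecidableEq B]
    (X : Ω → A) (Y : Ω → B) :
    entropy b p (fun ω => (X ω, Y ω)) ≤ entropy b p X + entropy b p Y := by
  set r := probOf p (fun ω => (X ω, Y ω)) with hrdef
  set q := probOf p X with hqdef
  set s := probOf p Y with hsdef
  have hrnn : ∀ z, 0 ≤ r z := fun z => rssb_probOf_nonneg hp _ z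
  have hqnn : ∀ x, 0 ≤ q x := fun x => rssb_probOf_nonneg hp _ x
  have hsnn : ∀ y, 0 ≤ s y := fun y => rssb_probOf_nonneg hp _ y
  have hq : ∀ x, q x = ∑ y, r (x, y) := fun x => rssb_marginal_fst X Y x
  have hs : ∀ y, s y = ∑ x, r (x, y) := fun y => rssb_marginal_snd X Y y
  have hrq : ∀ z : A × B, r z ≤ q z.1 := by
    intro z
    rw [hq]
    exact Finset.single_le_sum (f := fun y => r (z.1, y)) (fun y _ => hrnn _)
      (Finset.mem_univ z.2)
  have hrs : ∀ z : A × B, r z ≤ s z.2 := by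
    intro z
    rw [hs]
    exact Finset.single_le_sum (f := fun x => r (x, z.2)) (fun x _ => hrnn _)
      (Finset.mem_univ z.1)
  have hlb : 0 < Real.log b := Real.log_pos hb
  have e1 : ∑ x, q x * Real.logb b (q x) = ∑ z : A × B, r z * Real.logb b (q z.1) := by
    rw [Fintype.sum_prod_type]
    apply Finset.sum_congr rfl
    intro x _
    show q x * Real.logb b (q x) = ∑ y, r (x, y) * Real.logb b (q x)
    rw [← Finset.sum_mul, ← hq]
  have e2 : ∑ y, s y * Real.logb b (s y) = ∑ z : A × B, r z * Real.logb b (s z.2) := by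
    rw [Fintype.sum_prod_type_right]
    apply Finset.sum_congr rfl
    intro y _
    show s y * Real.logb b (s y) = ∑ x, r (x, y) * Real.logb b (s y)
    rw [← Finset.sum_mul, ← hs]
  have bound : ∀ z : A × B,
      r z * (Real.logb b (q z.1) + Real.logb b (s z.2) - Real.logb b (r z)) ≤
      (q z.1 * s z.2 - r z) / Real.log b := by
    intro z
    rcases eq_or_lt_of_le (hrnn z) with h0 | h0
    · rw [← h0]
      simp only [zero_mul, sub_zero]
      exact div_nonneg (mul_nonneg (hqnn _) (hsnn _)) (le_of_lt hlb)
    · have hq0 : 0 < q z.1 := lt_of_lt_of_le h0 (hrq z)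
      have hs0 : 0 < s z.2 := lt_of_lt_of_le h0 (hrs z)
      have hcomb : Real.logb b (q z.1) + Real.logb b (s z.2) - Real.logb b (r z) =
          Real.logb b (q z.1 * s z.2 / r z) := by
        rw [Real.logb_div (by positivity) (ne_of_gt h0),
          Real.logb_mul (ne_of_gt hq0) (ne_of_gt hs0)]
      rw [hcomb, Real.logb]
      have hlog : Real.log (q z.1 * s z.2 / r z) ≤ q z.1 * s z.2 / r z - 1 :=
        Real.log_le_sub_one_of_pos (by positivity)
      calc r z * (Real.log (q z.1 * s z.2 / r z) / Real.log b)
          ≤ r z * ((q z.1 * s z.2 / r z - 1) / Real.log b) := by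
            apply mul_le_mul_of_nonneg_left _ (le_of_lt h0)
            exact div_le_div_of_nonneg_right hlog hlb.le
        _ = (q z.1 * s z.2 - r z) / Real.log b := by
            field_simp
  have sum_bound : ∑ z : A × B,
      r z * (Real.logb b (q z.1) + Real.logb b (s z.2) - Real.logb b (r z)) ≤ 0 := by
    calc ∑ z : A × B, r z * (Real.logb b (q z.1) + Real.logb b (s z.2) - Real.logb b (r z))
        ≤ ∑ z : A × B, (q z.1 * s z.2 - r z) / Real.log b :=
          Finset.sum_le_sum fun z _ => bound z
      _ = ((∑ x, q x) * (∑ y, s y) - ∑ z : A × B, r z) / Real.log b := by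
          have hqs : ∑ z : A × B, q z.1 * s z.2 = (∑ x, q x) * (∑ y, s y) := by
            rw [Finset.sum_mul_sum, Fintype.sum_prod_type]
          rw [← hqs, ← Finset.sum_sub_distrib, Finset.sum_div]
      _ = 0 := by
          rw [rssb_sum_probOf hp1, rssb_sum_probOf hp1, rssb_sum_probOf hp1]
          ring
  have expand : ∑ z : A × B,
      r z * (Real.logb b (q z.1) + Real.logb b (s z.2) - Real.logb b (r z)) =
      (∑ x, q x * Real.logb b (q x)) + (∑ y, s y * Real.logb b (s y)) -
        ∑ z : A × B, r z * Real.logb b (r z) := by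
    rw [e1, e2, ← Finset.sum_add_distrib, ← Finset.sum_sub_distrib]
    apply Finset.sum_congr rfl
    intro z _
    ring
  unfold entropy
  rw [← hrdef, ← hqdef, ← hsdef]
  linarith [sum_bound, expand]

lemma rssb_cond_step (hb : 1 < b) (hp : ∀ ω, 0 ≤ p ω) (hp1 : ∑ ω, p ω = 1)
    {σ C D : Type*} [Fintype σ] [DecidableEq σ] [Fintype C] [DecidableEq C]
    [Fintype D] [DecidableEq D] (S : Ω → σ) (W : Ω → C) (Y : Ω → D) :
    condEntropy b p S Y ≤ condEntropy b p S (fun ω => (W ω, Y ω)) + entropy b p W := by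
  have h1 : entropy b p (fun ω => (S ω, Y ω)) ≤
      entropy b p (fun ω => (S ω, (W ω, Y ω))) :=
    rssb_entropy_comp_le hb hp (fun ω => (S ω, (W ω, Y ω))) (fun z => (z.1, z.2.2))
  have h2 : entropy b p (fun ω => (W ω, Y ω)) ≤ entropy b p W + entropy b p Y :=
    rssb_subadd hb hp hp1 W Y
  unfold condEntropy
  linarith

lemma rssb_tuple_step {N : ℕ} {V : Fin N → Type*} [∀ i, Fintype (V i)]
    [∀ i, DecidableEq (V i)]
    (hb : 1 < b) (hp : ∀ ω, 0 ≤ p ω) (hp1 : ∑ ω, p ω = 1)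
    {σ : Type*} [Fintype σ] [DecidableEq σ] (S : Ω → σ)
    (X : ∀ i, Ω → V i) (i : Fin N) (B : Finset (Fin N)) :
    condEntropy b p S (tupleOn X B) ≤
      condEntropy b p S (tupleOn X (insert i B)) + entropy b p (X i) := by
  classical
  set g : (∀ j : (insert i B : Finset (Fin N)), V j) → V i × ∀ j : B, V j :=
    fun f => (f ⟨i, Finset.mem_insert_self i B⟩,
      fun j => f ⟨j.1, Finset.mem_insert_of_mem j.2⟩) with hg
  set h : (V i × ∀ j : B, V j) → ∀ j : (insert i B : Finset (Fin N)), V j :=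
    fun z j => if hj : j.1 ∈ B then z.2 ⟨j.1, hj⟩ else
      cast (congrArg V ((Finset.mem_insert.mp j.2).resolve_right hj).symm) z.1 with hh
  have hgh : ∀ ω, g (tupleOn X (insert i B) ω) = (X i ω, tupleOn X B ω) := fun ω => rfl
  have hhg : ∀ ω, h (X i ω, tupleOn X B ω) = tupleOn X (insert i B) ω := by
    intro ω
    funext j
    rcases j with ⟨jv, hjv⟩
    by_cases hj : jv ∈ B
    · simp [hh, hj, tupleOn]
    · have hji : jv = i := (Finset.mem_insert.mp hjv).resolve_right hj
      subst hji
      simp [hh, hj, tupleOn]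
  have hY : entropy b p (tupleOn X (insert i B)) =
      entropy b p (fun ω => (X i ω, tupleOn X B ω)) :=
    rssb_entropy_congr hb hp _ _ g h hgh hhg
  have hSY : entropy b p (fun ω => (S ω, tupleOn X (insert i B) ω)) =
      entropy b p (fun ω => (S ω, (X i ω, tupleOn X B ω))) :=
    rssb_entropy_congr hb hp _ _ (Prod.map id g) (Prod.map id h)
      (fun ω => congrArg (fun t => (S ω, t)) (hgh ω))
      (fun ω => congrArg (fun t => (S ω, t)) (hhg ω))
  have hC : condEntropy b p S (tupleOn X (insert i B)) =
      condEntropy b p S (fun ω => (X i ω, tupleOn X B ω)) := by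
    unfold condEntropy
    rw [hSY, hY]
  rw [hC]
  exact rssb_cond_step hb hp hp1 S (X i) (tupleOn X B)

lemma rssb_chain {N : ℕ} {V : Fin N → Type*} [∀ i, Fintype (V i)]
    [∀ i, DecidableEq (V i)]
    (hb : 1 < b) (hp : ∀ ω, 0 ≤ p ω) (hp1 : ∑ ω, p ω = 1)
    {σ : Type*} [Fintype σ] [DecidableEq σ] (S : Ω → σ)
    (X : ∀ i, Ω → V i) {α : ℝ} (hα : 0 ≤ α) (hshare : ∀ i, entropy b p (X i) ≤ α)
    (Z : Finset (Fin N)) :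
    ∀ n (B : Finset (Fin N)), Z ⊆ B → B.card = Z.card + n →
      condEntropy b p S (tupleOn X Z) ≤ condEntropy b p S (tupleOn X B) + n * α := by
  intro n
  induction n with
  | zero =>
      intro B hZB hcard
      have hZB' : Z = B := Finset.eq_of_subset_of_card_le hZB (by omega)
      subst hZB'
      simp
  | succ n ih =>
      intro B hZB hcard
      obtain ⟨i, hiB, hiZ⟩ : ∃ i ∈ B, i ∉ Z := by
        by_contra hcon
        push_neg at hcon
        have := Finset.card_le_card hcon
        omega
      have hZB' : Z ⊆ B.erase i := fun x hx =>
        Finset.mem_erase.mpr ⟨fun he => hiZ (he ▸ hx), hZB hx⟩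
      have hcard' : (B.erase i).card = Z.card + n := by
        rw [Finset.card_erase_of_mem hiB]; omega
      have h1 := ih (B.erase i) hZB' hcard'
      have h2 := rssb_tuple_step hb hp hp1 S X i (B.erase i)
      rw [Finset.insert_erase hiB] at h2
      have h3 := hshare i
      push_cast
      linarith

end aux

/-- Ramp secret-sharing entropy bound: if any `κ` of the shares determine the
secret, any `ζ` shares are independent of it, and each share has entropy at
most `α`, then `H(S) ≤ (κ - ζ)·α`. -/
theorem ramp_secret_sharing_entropy_bound
    {Ω : Type*} [Fintype Ω] {N : ℕ} (b : ℝ) (hb : 1 < b)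
    (p : Ω → ℝ) (hp : ∀ ω, 0 ≤ p ω) (hp1 : ∑ ω, p ω = 1)
    {σ : Type*} [Fintype σ] [DecidableEq σ] (S : Ω → σ)
    {V : Fin N → Type*} [∀ i, Fintype (V i)] [∀ i, DecidableEq (V i)]
    (X : ∀ i, Ω → V i)
    (ζ κ : ℕ) (hζκ : ζ ≤ κ) (hκN : κ ≤ N) (α : ℝ) (hα : 0 ≤ α)
    (hres : ∀ A : Finset (Fin N), A.card = κ → condEntropy b p S (tupleOn X A) = 0)
    (hpriv : ∀ Z : Finset (Fin N), Z.card = ζ →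
      condEntropy b p S (tupleOn X Z) = entropy b p S)
    (hshare : ∀ i, entropy b p (X i) ≤ α) :
    entropy b p S ≤ ((κ : ℝ) - (ζ : ℝ)) * α := by
  obtain ⟨A, -, hAcard⟩ := Finset.exists_subset_card_eq (s := (Finset.univ : Finset (Fin N))) (n := κ)
    (by simpa using hκN)
  obtain ⟨Z, hZA, hZcard⟩ := Finset.exists_subset_card_eq (s := A) (n := ζ) (by omega)
  have hchain := rssb_chain hb hp hp1 S X hα hshare Z (κ - ζ) A hZA (by omega)
  rw [hpriv Z hZcard, hres A hAcard] at hchain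
  have hcast : ((κ - ζ : ℕ) : ℝ) = (κ : ℝ) - (ζ : ℝ) := by
    push_cast [hζκ]; ring
  rw [hcast] at hchain
  linarith
end

section
/- Erdős–Rényi connectivity at p = (log n + log log n)/n: for each sufficiently large n let p_n = (log n + log log n)/n ∈ [0,1], and let μ_n be the product probability measure on functions ω from the edge set of the complete graph on n vertices to {0,1} in which each coordinate independently equals 1 with probability p_n. Let G(ω) be the simple graph on n vertices whose edges are the pairs e with ω(e) = 1. Then μ_n({ω : G(ω) is connected}) → 1 as n → ∞. -/
open MeasureTheory

/-- The simple graph on `n` vertices determined by an indicator function `ω` on the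
edge set of the complete graph (the non-diagonal unordered pairs): `u` and `v` are
adjacent iff `u ≠ v` and the edge `{u,v}` is present (`ω = true`). -/
def erGraph (n : ℕ) (ω : {e : Sym2 (Fin n) // ¬ e.IsDiag} → Bool) : SimpleGraph (Fin n) where
  Adj u v := ∃ h : u ≠ v, ω ⟨s(u, v), fun hd => h (Sym2.mk_isDiag_iff.mp hd)⟩ = true
  symm := by
    constructor
    rintro u v ⟨h, hω⟩
    refine ⟨h.symm, ?_⟩
    convert hω using 2
    exact Subtype.ext Sym2.eq_swap
  loopless := by constructor; rintro u ⟨h, _⟩; exact h rfl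

/-- The Bernoulli measure on `Bool` giving probability `p` to `true` and `1 - p`
to `false`. -/
noncomputable def bernoulliMeasure (p : ℝ) : Measure Bool :=
  ENNReal.ofReal p • Measure.dirac true + ENNReal.ofReal (1 - p) • Measure.dirac false

/-- The product measure on indicator functions of the edges of the complete graph on
`n` vertices, in which each edge is present independently with probability `p`. -/
noncomputable def erMeasure (n : ℕ) (p : ℝ) :
    Measure ({e : Sym2 (Fin n) // ¬ e.IsDiag} → Bool) :=
  Measure.pi fun _ => bernoulliMeasure p

/-! ### Auxiliary material for the proof -/

open Filter Real
open scoped Classical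

section MeasureSide

lemma ER.bern_prob (p : ℝ) (h0 : 0 ≤ p) (h1 : p ≤ 1) :
    IsProbabilityMeasure (bernoulliMeasure p) := by
  constructor
  simp [bernoulliMeasure]
  rw [← ENNReal.ofReal_add h0 (by linarith)]
  norm_num

lemma ER.bern_false (p : ℝ) : bernoulliMeasure p {false} = ENNReal.ofReal (1 - p) := by
  simp [bernoulliMeasure,
    Measure.dirac_apply' _ (MeasurableSet.of_discrete (s := ({false} : Set Bool)))]

/-- The edge `e` crosses the cut determined by `S`. -/
def ER.Cross {n : ℕ} (S : Finset (Fin n)) (e : {e : Sym2 (Fin n) // ¬ e.IsDiag}) : Prop :=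
  ∃ u v, u ∈ S ∧ v ∉ S ∧ e.1 = s(u, v)

/-- The event that no edge crossing the cut determined by `S` is present. -/
def ER.cutEvent {n : ℕ} (S : Finset (Fin n)) : Set ({e : Sym2 (Fin n) // ¬ e.IsDiag} → Bool) :=
  Set.univ.pi fun e => if ER.Cross S e then ({false} : Set Bool) else Set.univ

lemma ER.cutEvent_measure (n : ℕ) (p : ℝ) (h0 : 0 ≤ p) (h1 : p ≤ 1) (S : Finset (Fin n)) :
    erMeasure n p (ER.cutEvent S)
      = ENNReal.ofReal (1 - p) ^ (Finset.univ.filter (ER.Cross S)).card := by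
  haveI := ER.bern_prob p h0 h1
  rw [erMeasure, ER.cutEvent, Measure.pi_pi]
  simp only [apply_ite (bernoulliMeasure p), ER.bern_false, measure_univ]
  rw [Finset.prod_ite, Finset.prod_const, Finset.prod_const, one_pow, mul_one]

lemma ER.cross_card {n : ℕ} (S : Finset (Fin n)) (hS : S.Nonempty) (hn : S.card < n) :
    S.card * (n - S.card) ≤ (Finset.univ.filter (ER.Cross S)).card := by
  obtain ⟨u₀, hu₀⟩ := hS
  have hScompl : Sᶜ.Nonempty := by
    rw [← Finset.card_pos, Finset.card_compl, Fintype.card_fin]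
    omega
  obtain ⟨v₀, hv₀⟩ := hScompl
  have hv₀' : v₀ ∉ S := Finset.mem_compl.mp hv₀
  have huv : u₀ ≠ v₀ := fun h => hv₀' (h ▸ hu₀)
  let e₀ : {e : Sym2 (Fin n) // ¬ e.IsDiag} := ⟨s(u₀, v₀), by simpa using huv⟩
  let f : Fin n × Fin n → {e : Sym2 (Fin n) // ¬ e.IsDiag} := fun x =>
    if h : x.1 ≠ x.2 then ⟨s(x.1, x.2), by simpa using h⟩ else e₀
  have := Finset.card_le_card_of_injOn f
    (s := S ×ˢ Sᶜ) (t := Finset.univ.filter (ER.Cross S))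
    (by
      rintro ⟨a, b⟩ hab
      rw [Finset.mem_coe, Finset.mem_product, Finset.mem_compl] at hab
      have hne : a ≠ b := fun h => hab.2 (h ▸ hab.1)
      simp only [Finset.mem_coe, Finset.mem_filter, Finset.mem_univ, true_and]
      refine ⟨a, b, hab.1, hab.2, ?_⟩
      simp [f, hne])
    (by
      rintro ⟨a, b⟩ hab ⟨c, d⟩ hcd heq
      simp only [Finset.coe_product, Set.mem_prod, Finset.mem_coe, Finset.mem_compl] at hab hcd
      have hne1 : a ≠ b := fun h => hab.2 (h ▸ hab.1)
      have hne2 : c ≠ d := fun h => hcd.2 (h ▸ hcd.1)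
      simp only [f, dif_pos hne1, dif_pos hne2, Subtype.mk.injEq, Sym2.eq_iff] at heq
      rcases heq with ⟨rfl, rfl⟩ | ⟨rfl, rfl⟩
      · rfl
      · exact absurd hab.1 hcd.2)
  calc S.card * (n - S.card) = (S ×ˢ Sᶜ).card := by
        rw [Finset.card_product, Finset.card_compl, Fintype.card_fin]
    _ ≤ _ := this

lemma ER.exists_cut {n : ℕ} (hn : 1 ≤ n) (ω : {e : Sym2 (Fin n) // ¬ e.IsDiag} → Bool)
    (h : ¬ (erGraph n ω).Connected) :
    ∃ S : Finset (Fin n), S.Nonempty ∧ 2 * S.card ≤ n ∧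
      ∀ x ∈ S, ∀ y, y ∉ S → ¬ (erGraph n ω).Adj x y := by
  set G := erGraph n ω
  haveI : Nonempty (Fin n) := Fin.pos_iff_nonempty.mp (by omega)
  rw [SimpleGraph.connected_iff] at h
  push_neg at h
  have hpre : ¬ G.Preconnected := fun hp => by
    have h' := h hp
    exact (not_isEmpty_of_nonempty (Fin n)) (by simpa [not_nonempty_iff] using h')
  rw [SimpleGraph.Preconnected] at hpre
  push_neg at hpre
  obtain ⟨u, v, huv⟩ := hpre
  set S₀ : Finset (Fin n) := Finset.univ.filter (fun x => G.Reachable u x) with hS₀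
  have hu : u ∈ S₀ := by simp [hS₀]
  have hv : v ∉ S₀ := by simp [hS₀, huv]
  have key : ∀ x ∈ S₀, ∀ y, y ∉ S₀ → ¬ G.Adj x y := by
    intro x hx y hy hadj
    simp only [hS₀, Finset.mem_filter, Finset.mem_univ, true_and] at hx hy
    exact hy (hx.trans hadj.reachable)
  have hcard : S₀.card ≤ n := le_trans (Finset.card_le_univ _) (by simp)
  by_cases hsize : 2 * S₀.card ≤ n
  · exact ⟨S₀, ⟨u, hu⟩, hsize, key⟩
  · refine ⟨S₀ᶜ, ⟨v, Finset.mem_compl.mpr hv⟩, ?_, ?_⟩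
    · rw [Finset.card_compl, Fintype.card_fin]; omega
    · intro x hx y hy hadj
      rw [Finset.mem_compl] at hx
      rw [Finset.mem_compl, not_not] at hy
      exact key y hy x hx hadj.symm

lemma ER.mem_cutEvent {n : ℕ} (S : Finset (Fin n)) (ω : {e : Sym2 (Fin n) // ¬ e.IsDiag} → Bool)
    (hnc : ∀ x ∈ S, ∀ y, y ∉ S → ¬ (erGraph n ω).Adj x y) : ω ∈ ER.cutEvent S := by
  intro e _
  simp only []
  by_cases hc : ER.Cross S e
  · rw [if_pos hc]
    obtain ⟨u, v, hu, hv, he⟩ := hc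
    have huv : u ≠ v := by
      intro h
      exact e.2 (by rw [he]; exact Sym2.mk_isDiag_iff.mpr h)
    have hne := hnc u hu v hv
    rw [erGraph] at hne
    simp only [not_exists] at hne
    have := hne huv
    have heq : e = ⟨s(u, v), fun hd => huv (Sym2.mk_isDiag_iff.mp hd)⟩ := Subtype.ext he
    rw [heq]
    simpa using this
  · rw [if_neg hc]; trivial

lemma ER.sum_cut_bound {n : ℕ} (g : ℕ → ENNReal) :
    ∑ S ∈ Finset.univ.filter (fun S : Finset (Fin n) => S.Nonempty ∧ 2 * S.card ≤ n), g S.card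
      ≤ ∑ k ∈ Finset.Icc 1 (n / 2), (n.choose k : ENNReal) * g k := by
  have hsub : Finset.univ.filter (fun S : Finset (Fin n) => S.Nonempty ∧ 2 * S.card ≤ n)
      ⊆ (Finset.Icc 1 (n / 2)).biUnion (fun k => Finset.powersetCard k Finset.univ) := by
    intro S hS
    simp only [Finset.mem_filter, Finset.mem_univ, true_and] at hS
    rw [Finset.mem_biUnion]
    refine ⟨S.card, ?_, ?_⟩
    · rw [Finset.mem_Icc]
      constructor
      · exact Finset.card_pos.mpr hS.1
      · omega
    · rw [Finset.mem_powersetCard_univ]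
  calc _ ≤ ∑ S ∈ (Finset.Icc 1 (n / 2)).biUnion (fun k => Finset.powersetCard k Finset.univ),
        g S.card := Finset.sum_le_sum_of_subset hsub
    _ = ∑ k ∈ Finset.Icc 1 (n / 2), ∑ S ∈ Finset.powersetCard k Finset.univ, g S.card := by
        rw [Finset.sum_biUnion]
        intro a ha b hb hab
        simp only [Function.onFun]
        rw [Finset.disjoint_left]
        intro S hSa hSb
        rw [Finset.mem_powersetCard_univ] at hSa hSb
        exact hab (hSa ▸ hSb)
    _ = ∑ k ∈ Finset.Icc 1 (n / 2), (n.choose k : ENNReal) * g k := by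
        refine Finset.sum_congr rfl fun k _ => ?_
        have : ∀ S ∈ Finset.powersetCard k (Finset.univ : Finset (Fin n)), g S.card = g k := by
          intro S hS
          rw [Finset.mem_powersetCard_univ] at hS
          rw [hS]
        rw [Finset.sum_congr rfl this, Finset.sum_const, Finset.card_powersetCard,
          Finset.card_univ, Fintype.card_fin, nsmul_eq_mul]

lemma ER.disc_bound (n : ℕ) (p : ℝ) (h0 : 0 ≤ p) (h1 : p ≤ 1) (hn : 1 ≤ n) :
    erMeasure n p {ω | ¬ (erGraph n ω).Connected}
      ≤ ENNReal.ofReal (∑ k ∈ Finset.Icc 1 (n / 2),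
          (n.choose k : ℝ) * (1 - p) ^ (k * (n - k))) := by
  set 𝒮 := Finset.univ.filter (fun S : Finset (Fin n) => S.Nonempty ∧ 2 * S.card ≤ n) with h𝒮
  have hincl : {ω | ¬ (erGraph n ω).Connected} ⊆ ⋃ S ∈ 𝒮, ER.cutEvent S := by
    intro ω hω
    obtain ⟨S, hS1, hS2, hS3⟩ := ER.exists_cut hn ω hω
    refine Set.mem_biUnion ?_ (ER.mem_cutEvent S ω hS3)
    exact Finset.mem_filter.mpr ⟨Finset.mem_univ S, hS1, hS2⟩
  calc erMeasure n p {ω | ¬ (erGraph n ω).Connected}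
      ≤ erMeasure n p (⋃ S ∈ 𝒮, ER.cutEvent S) := measure_mono hincl
    _ ≤ ∑ S ∈ 𝒮, erMeasure n p (ER.cutEvent S) := measure_biUnion_finset_le _ _
    _ ≤ ∑ S ∈ 𝒮, ENNReal.ofReal (1 - p) ^ (S.card * (n - S.card)) := by
        apply Finset.sum_le_sum
        intro S hS
        simp only [h𝒮, Finset.mem_filter, Finset.mem_univ, true_and] at hS
        rw [ER.cutEvent_measure n p h0 h1 S]
        have hc1 : 0 < S.card := Finset.card_pos.mpr hS.1
        apply pow_le_pow_of_le_one (by simp) (ENNReal.ofReal_le_one.mpr (by linarith))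
        exact ER.cross_card S hS.1 (by omega)
    _ ≤ ∑ k ∈ Finset.Icc 1 (n / 2), (n.choose k : ENNReal)
          * ENNReal.ofReal (1 - p) ^ (k * (n - k)) :=
        ER.sum_cut_bound (fun k => ENNReal.ofReal (1 - p) ^ (k * (n - k)))
    _ = ENNReal.ofReal (∑ k ∈ Finset.Icc 1 (n / 2),
          (n.choose k : ℝ) * (1 - p) ^ (k * (n - k))) := by
        rw [ENNReal.ofReal_sum_of_nonneg]
        · refine Finset.sum_congr rfl fun k _ => ?_
          rw [ENNReal.ofReal_mul (by positivity), ENNReal.ofReal_pow (by linarith),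
            ENNReal.ofReal_natCast]
        · intro k _
          exact mul_nonneg (Nat.cast_nonneg _) (pow_nonneg (by linarith) _)

end MeasureSide


lemma ER.choose_le_two_pow' (n k : ℕ) : n.choose k ≤ 2 ^ n := by
  rcases le_or_gt k n with h | h
  · calc n.choose k ≤ ∑ i ∈ Finset.range (n + 1), n.choose i :=
        Finset.single_le_sum (fun i _ => Nat.zero_le _) (Finset.mem_range.mpr (by omega))
      _ = 2 ^ n := Nat.sum_range_choose n
  · rw [Nat.choose_eq_zero_of_lt h]; exact Nat.zero_le _

lemma ER.geom_range (r : ℝ) (h0 : 0 ≤ r) (h1 : r ≤ 1/2) (m : ℕ) :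
    ∑ k ∈ Finset.range m, r ^ k ≤ 2 := by
  induction m with
  | zero => simp
  | succ m ih =>
    rw [Finset.sum_range_succ']
    simp only [pow_succ, pow_zero]
    calc (∑ i ∈ Finset.range m, r ^ i * r) + 1 = (∑ i ∈ Finset.range m, r ^ i) * r + 1 := by
          rw [Finset.sum_mul]
      _ ≤ 2 * (1/2) + 1 := by
          have hs : 0 ≤ ∑ i ∈ Finset.range m, r ^ i := Finset.sum_nonneg fun i _ => pow_nonneg h0 i
          nlinarith
      _ = 2 := by norm_num

lemma ER.geom_Icc (r : ℝ) (h0 : 0 ≤ r) (h1 : r ≤ 1/2) (m : ℕ) :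
    ∑ k ∈ Finset.Icc 1 m, r ^ k ≤ 2 * r := by
  rw [← Finset.Ico_add_one_right_eq_Icc, Finset.sum_Ico_eq_sum_range]
  have he : ∀ i ∈ Finset.range (m + 1 - 1), r ^ (1 + i) = r * r ^ i := fun i _ => by
    rw [pow_add, pow_one]
  rw [Finset.sum_congr rfl he, ← Finset.mul_sum]
  calc r * ∑ i ∈ Finset.range (m + 1 - 1), r ^ i
      ≤ r * 2 := mul_le_mul_of_nonneg_left (ER.geom_range r h0 h1 _) h0
    _ = 2 * r := by ring

noncomputable def ER.plog (n : ℕ) : ℝ := (Real.log n + Real.log (Real.log n)) / n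

lemma ER.term_bound (n k : ℕ) (hk1 : 1 ≤ k) (hk2 : 2 * k ≤ n)
    (hL : 6 ≤ Real.log n) (hA0 : 0 ≤ Real.log (Real.log n))
    (hA3 : 3 * Real.log (Real.log n) ≤ Real.log n)
    (hhalf : 2 * Real.log n ≤ (n : ℝ)) :
    (n.choose k : ℝ) * (1 - ER.plog n) ^ (k * (n - k)) ≤
      Real.exp (4 - Real.log (Real.log n)) ^ k + 2 ^ n * Real.exp (-(3/2) * n) := by
  have hn2 : 2 ≤ n := by omega
  set N : ℝ := (n : ℝ) with hN
  set L : ℝ := Real.log N with hLdef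
  set A : ℝ := Real.log L with hAdef
  have hN2 : (2 : ℝ) ≤ N := by rw [hN]; exact_mod_cast hn2
  have hN0 : (0 : ℝ) < N := by linarith
  have hL0 : (0 : ℝ) < L := by linarith
  have hAL : A ≤ L := by
    have := Real.log_le_sub_one_of_pos hL0
    rw [← hAdef] at this
    linarith
  set p : ℝ := ER.plog n with hpdef
  have hp0 : 0 ≤ p := by
    rw [hpdef, ER.plog, ← hLdef, ← hAdef]
    exact div_nonneg (by linarith) hN0.le
  have hp1 : p ≤ 1 := by
    rw [hpdef, ER.plog, div_le_one hN0, ← hLdef, ← hAdef]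
    linarith
  have hpN : p * N = L + A := by
    rw [hpdef, ER.plog, ← hLdef, ← hAdef]
    field_simp
    exact hN
  set q : ℝ := 1 - p with hqdef
  have hq0 : 0 ≤ q := by rw [hqdef]; linarith
  have hqe : q ≤ Real.exp (-p) := by
    have := Real.add_one_le_exp (-p)
    rw [hqdef]; linarith
  clear_value N L A p q
  have hkn : k ≤ n := by omega
  have hjcast : ((k * (n - k) : ℕ) : ℝ) = (k : ℝ) * (N - k) := by
    rw [hN]
    push_cast [Nat.cast_sub hkn]
    ring
  have hqj : q ^ (k * (n - k)) ≤ Real.exp (((k * (n - k) : ℕ) : ℝ) * (-p)) := by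
    calc q ^ (k * (n - k)) ≤ Real.exp (-p) ^ (k * (n - k)) :=
          pow_le_pow_left₀ hq0 hqe _
      _ = Real.exp (((k * (n - k) : ℕ) : ℝ) * (-p)) := (Real.exp_nat_mul _ _).symm
  have hkhalf : (k : ℝ) ≤ N / 2 := by
    have h : ((2 * k : ℕ) : ℝ) ≤ N := by rw [hN]; exact_mod_cast hk2
    push_cast at h
    linarith
  have hqjnn : (0:ℝ) ≤ q ^ (k * (n - k)) := pow_nonneg hq0 _
  have hk0 : (0 : ℝ) ≤ (k : ℝ) := Nat.cast_nonneg k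
  have hk1' : (1 : ℝ) ≤ (k : ℝ) := by exact_mod_cast hk1
  by_cases hcase : (k : ℝ) ≤ 3 * N / L
  · have hC : (n.choose k : ℝ) ≤ N ^ k := by
      have h := Nat.choose_le_pow n k
      calc (n.choose k : ℝ) ≤ ((n ^ k : ℕ) : ℝ) := by exact_mod_cast h
        _ = N ^ k := by rw [hN]; push_cast; rfl
    have hNk : N ^ k = Real.exp ((k : ℝ) * L) := by
      rw [hLdef, Real.exp_nat_mul, Real.exp_log hN0]
    have hpk : p * (k : ℝ) ≤ 4 := by
      have h1 : p * (k : ℝ) ≤ p * (3 * N / L) :=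
        mul_le_mul_of_nonneg_left hcase hp0
      have h2 : p * (3 * N / L) = 3 * (p * N) / L := by ring
      rw [h2, hpN] at h1
      have h3 : 3 * (L + A) / L ≤ 4 := by
        rw [div_le_iff₀ hL0]
        linarith
      linarith
    have hexp : (k : ℝ) * L + ((k * (n - k) : ℕ) : ℝ) * (-p) ≤ (k : ℝ) * (4 - A) := by
      rw [hjcast]
      have f1 : p * N * (k:ℝ) = (L + A) * (k:ℝ) := by rw [hpN]
      have f2 : p * (k:ℝ) * (k:ℝ) ≤ 4 * (k:ℝ) := mul_le_mul_of_nonneg_right hpk hk0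
      have hid : (k:ℝ) * (N - (k:ℝ)) * (-p) = -(p * N * (k:ℝ)) + p * (k:ℝ) * (k:ℝ) := by
        ring
      linarith [f1, f2, hid]
    calc (n.choose k : ℝ) * q ^ (k * (n - k))
        ≤ Real.exp ((k:ℝ) * L) * Real.exp (((k * (n - k) : ℕ) : ℝ) * (-p)) :=
          mul_le_mul (hNk ▸ hC) hqj hqjnn (Real.exp_nonneg _)
      _ = Real.exp ((k:ℝ) * L + ((k * (n - k) : ℕ) : ℝ) * (-p)) := (Real.exp_add _ _).symm
      _ ≤ Real.exp ((k:ℝ) * (4 - A)) := Real.exp_le_exp.mpr hexp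
      _ = Real.exp (4 - A) ^ k := Real.exp_nat_mul (4 - A) k
      _ ≤ Real.exp (4 - A) ^ k + 2 ^ n * Real.exp (-(3/2) * N) := by
          have hb : (0:ℝ) ≤ 2 ^ n * Real.exp (-(3/2) * N) := by positivity
          linarith
  · push_neg at hcase
    obtain ⟨M, hMdef⟩ : ∃ M : ℝ, M = 3 * N / L := ⟨_, rfl⟩
    rw [← hMdef] at hcase
    have hM0 : (0:ℝ) ≤ M := by rw [hMdef]; positivity
    have hMhalf : M ≤ N / 2 := by
      rw [hMdef, div_le_div_iff₀ hL0 (by norm_num : (0:ℝ) < 2)]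
      have h6 : N * 6 ≤ N * L := mul_le_mul_of_nonneg_left hL (by linarith)
      linarith
    have hpM : 3 ≤ p * M := by
      have h2 : p * M = 3 * (p * N) / L := by rw [hMdef]; ring
      rw [h2, hpN, le_div_iff₀ hL0]
      linarith
    have hstep1 : M * (N - M) ≤ (k:ℝ) * (N - k) := by
      have hx : (0:ℝ) ≤ ((k:ℝ) - M) * ((N - k) - M) :=
        mul_nonneg (by linarith) (by linarith)
      have hexpand : ((k:ℝ) - M) * ((N - k) - M) = (k:ℝ) * (N - k) - M * (N - M) := by
        ring
      linarith [hx, hexpand]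
    have hstep2 : M * (N / 2) ≤ M * (N - M) :=
      mul_le_mul_of_nonneg_left (by linarith) hM0
    have hjge : (3/2) * N ≤ p * ((k:ℝ) * (N - k)) := by
      have h4 : p * (M * (N/2)) ≤ p * ((k:ℝ) * (N - k)) :=
        mul_le_mul_of_nonneg_left (le_trans hstep2 hstep1) hp0
      have h5 : 3 * (N / 2) ≤ p * M * (N / 2) :=
        mul_le_mul_of_nonneg_right hpM (by linarith : (0:ℝ) ≤ N / 2)
      have hassoc : p * M * (N / 2) = p * (M * (N / 2)) := by ring
      linarith [h4, h5, hassoc]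
    have hqj2 : q ^ (k * (n - k)) ≤ Real.exp (-(3/2) * N) := by
      refine le_trans hqj (Real.exp_le_exp.mpr ?_)
      rw [hjcast]
      have hid2 : (k:ℝ) * (N - (k:ℝ)) * (-p) = -(p * ((k:ℝ) * (N - (k:ℝ)))) := by ring
      linarith [hjge, hid2]
    have hC2 : (n.choose k : ℝ) ≤ 2 ^ n := by
      have h := ER.choose_le_two_pow' n k
      calc (n.choose k : ℝ) ≤ ((2 ^ n : ℕ) : ℝ) := by exact_mod_cast h
        _ = 2 ^ n := by push_cast; rfl
    calc (n.choose k : ℝ) * q ^ (k * (n - k))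
        ≤ 2 ^ n * Real.exp (-(3/2) * N) :=
          mul_le_mul hC2 hqj2 hqjnn (by positivity)
      _ ≤ Real.exp (4 - A) ^ k + 2 ^ n * Real.exp (-(3/2) * N) := by
          have hb : (0:ℝ) ≤ Real.exp (4 - A) ^ k := by positivity
          linarith

noncomputable def ER.RR (n : ℕ) : ℝ :=
  ∑ k ∈ Finset.Icc 1 (n / 2), (n.choose k : ℝ) * (1 - ER.plog n) ^ (k * (n - k))

lemma ER.log_big_imp (n : ℕ) (hL : 6 ≤ Real.log n) : 2 ≤ n := by
  by_contra h
  push_neg at h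
  interval_cases n <;> simp [Real.log_zero, Real.log_one] at hL <;> norm_num at hL

lemma ER.RR_bound (n : ℕ)
    (hL : 6 ≤ Real.log n) (hA0 : 0 ≤ Real.log (Real.log n))
    (hA3 : 3 * Real.log (Real.log n) ≤ Real.log n)
    (hhalf : 2 * Real.log n ≤ (n : ℝ))
    (hA42 : 4 + Real.log 2 ≤ Real.log (Real.log n))
    (h03 : Real.log n ≤ (3/10) * (n : ℝ)) :
    ER.RR n ≤ 2 * Real.exp (4 - Real.log (Real.log n)) + Real.exp (-(1/2) * n) := by
  have hn2 : 2 ≤ n := ER.log_big_imp n hL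
  have hN0 : (0:ℝ) < n := by positivity
  set r : ℝ := Real.exp (4 - Real.log (Real.log n)) with hrdef
  have hr0 : 0 ≤ r := Real.exp_nonneg _
  have hr12 : r ≤ 1/2 := by
    rw [hrdef]
    calc Real.exp (4 - Real.log (Real.log n)) ≤ Real.exp (-Real.log 2) :=
          Real.exp_le_exp.mpr (by linarith)
      _ = 1/2 := by rw [Real.exp_neg, Real.exp_log (by norm_num : (0:ℝ) < 2)]; norm_num
  set β : ℝ := 2 ^ n * Real.exp (-(3/2) * n) with hβdef
  have hβ0 : 0 ≤ β := by rw [hβdef]; positivity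
  have step1 : ER.RR n ≤ ∑ k ∈ Finset.Icc 1 (n / 2), (r ^ k + β) := by
    apply Finset.sum_le_sum
    intro k hk
    rw [Finset.mem_Icc] at hk
    exact ER.term_bound n k hk.1 (by omega) hL hA0 hA3 hhalf
  have step2 : ∑ k ∈ Finset.Icc 1 (n / 2), (r ^ k + β) ≤ 2 * r + (n : ℝ) * β := by
    rw [Finset.sum_add_distrib, Finset.sum_const, Nat.card_Icc, nsmul_eq_mul]
    have h1 := ER.geom_Icc r hr0 hr12 (n / 2)
    have h2 : ((n / 2 + 1 - 1 : ℕ) : ℝ) ≤ (n : ℝ) := by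
      have : (n / 2 + 1 - 1 : ℕ) ≤ n := by omega
      exact_mod_cast this
    have h3 : ((n / 2 + 1 - 1 : ℕ) : ℝ) * β ≤ (n : ℝ) * β := mul_le_mul_of_nonneg_right h2 hβ0
    linarith
  have step3 : (n : ℝ) * β ≤ Real.exp (-(1/2) * n) := by
    have e1 : (n:ℝ) = Real.exp (Real.log n) := (Real.exp_log hN0).symm
    have e2 : (2:ℝ) ^ n = Real.exp ((n:ℝ) * Real.log 2) := by
      rw [Real.exp_nat_mul, Real.exp_log (by norm_num : (0:ℝ) < 2)]
    have e3 : (n : ℝ) * β = Real.exp (Real.log n + (n:ℝ) * Real.log 2 + -(3/2) * n) := by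
      rw [hβdef, Real.exp_add, Real.exp_add, ← e1, ← e2]
      ring
    rw [e3]
    apply Real.exp_le_exp.mpr
    have hlog2 : Real.log 2 ≤ 7/10 := by
      have := Real.log_two_lt_d9
      linarith
    have h4 : (n:ℝ) * Real.log 2 ≤ (n:ℝ) * (7/10) := mul_le_mul_of_nonneg_left hlog2 hN0.le
    linarith
  linarith

lemma ER.ev_conditions :
    ∀ᶠ n : ℕ in atTop, 6 ≤ Real.log n ∧ 0 ≤ Real.log (Real.log n) ∧
      3 * Real.log (Real.log n) ≤ Real.log n ∧ 2 * Real.log n ≤ (n : ℝ) ∧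
      4 + Real.log 2 ≤ Real.log (Real.log n) ∧ Real.log n ≤ (3/10) * (n : ℝ) ∧
      0 ≤ ER.plog n ∧ ER.plog n ≤ 1 := by
  have ev_nat : Tendsto (fun n : ℕ => (n : ℝ)) atTop atTop := tendsto_natCast_atTop_atTop
  have hLt : Tendsto (fun n : ℕ => Real.log n) atTop atTop :=
    Real.tendsto_log_atTop.comp ev_nat
  have hAt : Tendsto (fun n : ℕ => Real.log (Real.log n)) atTop atTop :=
    Real.tendsto_log_atTop.comp hLt
  have hdiv0 : Tendsto (fun x : ℝ => Real.log x / x) atTop (nhds 0) :=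
    Real.isLittleO_log_id_atTop.tendsto_div_nhds_zero
  have evL : ∀ᶠ n : ℕ in atTop, 6 ≤ Real.log n := hLt.eventually_ge_atTop 6
  have evA : ∀ᶠ n : ℕ in atTop, 4 + Real.log 2 ≤ Real.log (Real.log n) :=
    hAt.eventually_ge_atTop _
  have evA0 : ∀ᶠ n : ℕ in atTop, 0 ≤ Real.log (Real.log n) := hAt.eventually_ge_atTop 0
  have evq1 : ∀ᶠ n : ℕ in atTop, Real.log (Real.log n) / Real.log n ≤ 1/3 := by
    have := (hdiv0.comp hLt).eventually (eventually_le_nhds (by norm_num : (0:ℝ) < 1/3))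
    exact this
  have evq2 : ∀ᶠ n : ℕ in atTop, Real.log n / (n : ℝ) ≤ 3/10 := by
    have := (hdiv0.comp ev_nat).eventually (eventually_le_nhds (by norm_num : (0:ℝ) < 3/10))
    exact this
  have evn1 : ∀ᶠ n : ℕ in atTop, (1:ℝ) ≤ (n : ℝ) := ev_nat.eventually_ge_atTop 1
  filter_upwards [evL, evA, evA0, evq1, evq2, evn1] with n h1 h2 h3 h4 h5 h6
  have hL0 : (0:ℝ) < Real.log n := by linarith
  have hN0 : (0:ℝ) < (n:ℝ) := by linarith
  have hA3 : 3 * Real.log (Real.log n) ≤ Real.log n := by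
    rw [div_le_iff₀ hL0] at h4
    linarith
  have h03 : Real.log n ≤ (3/10) * (n : ℝ) := by
    rw [div_le_iff₀ hN0] at h5
    linarith
  have hhalf : 2 * Real.log n ≤ (n : ℝ) := by linarith
  have hAL : Real.log (Real.log n) ≤ Real.log n := by
    have := Real.log_le_sub_one_of_pos hL0
    linarith
  have hp0 : 0 ≤ ER.plog n := by
    rw [ER.plog]
    exact div_nonneg (by linarith) hN0.le
  have hp1 : ER.plog n ≤ 1 := by
    rw [ER.plog, div_le_one hN0]
    linarith
  exact ⟨h1, h3, hA3, hhalf, h2, h03, hp0, hp1⟩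

lemma ER.RR_tendsto : Tendsto ER.RR atTop (nhds 0) := by
  have ev_nat : Tendsto (fun n : ℕ => (n : ℝ)) atTop atTop := tendsto_natCast_atTop_atTop
  have hLt : Tendsto (fun n : ℕ => Real.log n) atTop atTop :=
    Real.tendsto_log_atTop.comp ev_nat
  have hAt : Tendsto (fun n : ℕ => Real.log (Real.log n)) atTop atTop :=
    Real.tendsto_log_atTop.comp hLt
  have t1 : Tendsto (fun n : ℕ => 2 * Real.exp (4 - Real.log (Real.log n))) atTop (nhds 0) := by
    have hbot : Tendsto (fun n : ℕ => 4 - Real.log (Real.log n)) atTop atBot := by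
      apply tendsto_atBot_add_const_left
      exact tendsto_neg_atTop_atBot.comp hAt
    have := Real.tendsto_exp_atBot.comp hbot
    have h2 := this.const_mul (2:ℝ)
    simpa using h2
  have t2 : Tendsto (fun n : ℕ => Real.exp (-(1/2) * (n:ℝ))) atTop (nhds 0) := by
    have hbot : Tendsto (fun n : ℕ => -(1/2) * (n:ℝ)) atTop atBot := by
      have h : Tendsto (fun n : ℕ => (1/2) * (n:ℝ)) atTop atTop :=
        ev_nat.const_mul_atTop (by norm_num)
      have := tendsto_neg_atTop_atBot.comp h
      refine this.congr fun n => ?_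
      show -((1/2) * (n:ℝ)) = -(1/2) * (n:ℝ)
      ring
    exact Real.tendsto_exp_atBot.comp hbot
  have tB : Tendsto (fun n : ℕ => 2 * Real.exp (4 - Real.log (Real.log n))
      + Real.exp (-(1/2) * (n:ℝ))) atTop (nhds 0) := by
    have := t1.add t2
    simpa using this
  apply tendsto_of_tendsto_of_tendsto_of_le_of_le' tendsto_const_nhds tB
  · filter_upwards [ER.ev_conditions] with n h
    obtain ⟨_, _, _, _, _, _, hp0, hp1⟩ := h
    apply Finset.sum_nonneg
    intro k _
    exact mul_nonneg (Nat.cast_nonneg _) (pow_nonneg (by linarith) _)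
  · filter_upwards [ER.ev_conditions] with n h
    obtain ⟨h1, h2, h3, h4, h5, h6, _, _⟩ := h
    exact ER.RR_bound n h1 h2 h3 h4 h5 h6

/-- Erdős–Rényi connectivity at `p = (log n + log log n)/n`: for sufficiently large
`n` this `p` lies in `[0,1]`, and the probability that `G(n, p)` is connected tends
to `1` as `n → ∞`. -/
theorem erdos_renyi_connected_at_log_threshold :
    (∀ᶠ n : ℕ in Filter.atTop,
        (Real.log n + Real.log (Real.log n)) / n ∈ Set.Icc (0 : ℝ) 1) ∧
      Filter.Tendsto
        (fun n : ℕ => erMeasure n ((Real.log n + Real.log (Real.log n)) / n)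
          {ω | (erGraph n ω).Connected})
        Filter.atTop (nhds 1) := by
  constructor
  · filter_upwards [ER.ev_conditions] with n h
    obtain ⟨_, _, _, _, _, _, hp0, hp1⟩ := h
    rw [Set.mem_Icc]
    exact ⟨hp0, hp1⟩
  · have h0 : Tendsto (fun n : ℕ => ENNReal.ofReal (ER.RR n)) atTop (nhds 0) := by
      have := ENNReal.tendsto_ofReal (ER.RR_tendsto)
      simpa using this
    have hlow : Tendsto (fun n : ℕ => 1 - ENNReal.ofReal (ER.RR n)) atTop (nhds 1) := by
      have := ENNReal.Tendsto.sub (tendsto_const_nhds :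
        Tendsto (fun _ : ℕ => (1 : ENNReal)) atTop (nhds 1)) h0 (Or.inl ENNReal.one_ne_top)
      simpa using this
    apply tendsto_of_tendsto_of_tendsto_of_le_of_le' hlow
      (tendsto_const_nhds : Tendsto (fun _ : ℕ => (1 : ENNReal)) atTop (nhds 1))
    · -- lower bound
      filter_upwards [ER.ev_conditions] with n h
      obtain ⟨hL6, _, _, _, _, _, hp0, hp1⟩ := h
      have hn1 : 1 ≤ n := by have := ER.log_big_imp n hL6; omega
      haveI := ER.bern_prob (ER.plog n) hp0 hp1
      haveI : IsProbabilityMeasure (erMeasure n (ER.plog n)) :=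
        Measure.pi.instIsProbabilityMeasure
          (μ := fun _ : {e : Sym2 (Fin n) // ¬ e.IsDiag} => bernoulliMeasure (ER.plog n))
      have hd : erMeasure n (ER.plog n) {ω | ¬ (erGraph n ω).Connected}
          ≤ ENNReal.ofReal (ER.RR n) := ER.disc_bound n (ER.plog n) hp0 hp1 hn1
      rw [tsub_le_iff_right]
      have hcompl : {ω | (erGraph n ω).Connected}ᶜ = {ω | ¬ (erGraph n ω).Connected} :=
        Set.compl_setOf _
      calc (1 : ENNReal) = erMeasure n (ER.plog n) Set.univ := measure_univ.symm
        _ = erMeasure n (ER.plog n)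
            ({ω | (erGraph n ω).Connected} ∪ {ω | (erGraph n ω).Connected}ᶜ) := by
            rw [Set.union_compl_self]
        _ ≤ erMeasure n (ER.plog n) {ω | (erGraph n ω).Connected}
            + erMeasure n (ER.plog n) {ω | (erGraph n ω).Connected}ᶜ := measure_union_le _ _
        _ ≤ erMeasure n (ER.plog n) {ω | (erGraph n ω).Connected}
            + ENNReal.ofReal (ER.RR n) := by
            rw [hcompl]
            exact add_le_add le_rfl hd
    · -- upper bound
      filter_upwards [ER.ev_conditions] with n h
      obtain ⟨_, _, _, _, _, _, hp0, hp1⟩ := h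
      haveI := ER.bern_prob (ER.plog n) hp0 hp1
      haveI : IsProbabilityMeasure (erMeasure n (ER.plog n)) :=
        Measure.pi.instIsProbabilityMeasure
          (μ := fun _ : {e : Sym2 (Fin n) // ¬ e.IsDiag} => bernoulliMeasure (ER.plog n))
      show erMeasure n (ER.plog n) {ω | (erGraph n ω).Connected} ≤ 1
      exact prob_le_one
end
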